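/- Fix d ≥ 2 and β ∈ (0,∞), let Q be an augmented β-arboreal gas Gibbs measure on Z^d, and let (A,Φ) be distributed as Q. Then: (1) (deletion tolerance) for every finite subgraph H of Z^d, the conditional probability Q(A ∩ H has no edges | 𝒢_H) is almost surely strictly positive; and (2) (merge tolerance) for every finite connected subgraph H of Z^d, the conditional probability Q(all vertices of H belong to a single equivalence class of the augmented connectivity relation of (A,Φ) | 𝒢_H) is almost surely strictly positive. -/

import Mathlib

open MeasureTheory
open scoped ENNReal symmDiff

noncomputable section

namespace ArborealGas

variable {V : Type*} (G : SimpleGraph V)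

/-- The (inner vertex) boundary of a subgraph `H` relative to the host subgraph `Γ` of `G`:
the vertices of `H` incident to an edge of `Γ` not belonging to `H`. -/
def bdry (Γ H : G.Subgraph) : Set V :=
  {v | v ∈ H.verts ∧ ∃ u, Γ.Adj v u ∧ ¬ H.Adj v u}

/-- Restriction of a relation to pairs inside a set. -/
def restrictRel (B : Set V) (φ : V → V → Prop) : V → V → Prop :=
  fun a b => a ∈ B ∧ b ∈ B ∧ φ a b

/-- `u` and `v` are connected in the quotient graph `F/φ` (the graph obtained from
`F` by identifying vertices of `F` lying in a common class of `φ`). -/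
def quotConn (F : G.Subgraph) (φ : V → V → Prop) : V → V → Prop :=
  Relation.ReflTransGen fun a b =>
    F.Adj a b ∨ (a ∈ F.verts ∧ b ∈ F.verts ∧ φ a b)

/-- `F` extends the boundary condition `φ` (an equivalence relation on the boundary of `H`
in the host `Γ`): the quotient `F/φ` is acyclic, i.e. every edge of `F` is a bridge of `F/φ`. -/
def Extends (Γ H : G.Subgraph) (φ : V → V → Prop) (F : G.Subgraph) : Prop :=
  ∀ a b, F.Adj a b →
    ¬ quotConn G (F.deleteEdges {s(a, b)}) (restrictRel (bdry G Γ H) φ) a b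

/-- `F` is a spanning forest of `H` extending the boundary condition `φ`:
an element of `𝓕(H,φ)` containing every vertex of `H`. -/
def IsSpanningForestExtending (Γ H : G.Subgraph) (φ : V → V → Prop) (F : G.Subgraph) : Prop :=
  F ≤ H ∧ F.verts = H.verts ∧ Extends G Γ H φ F

/-- `F` is an `(H,φ)`-maximal spanning forest: no edge of `H` can be added to `F`
while remaining a spanning forest extending `φ`. -/
def IsMaximalSpanningForestExtending (Γ H : G.Subgraph) (φ : V → V → Prop)
    (F : G.Subgraph) : Prop :=
  IsSpanningForestExtending G Γ H φ F ∧
    ∀ a b, (hab : H.Adj a b) → ¬ F.Adj a b →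
      ¬ IsSpanningForestExtending G Γ H φ (F ⊔ G.subgraphOfAdj (H.adj_sub hab))

open Classical in
/-- The unnormalized arboreal gas weight `β ^ |F|` of a spanning forest `F` of `H`
extending `φ` (with the convention `0 ^ 0 = 1`); for `β = ∞` the uniform weight on
`(H,φ)`-maximal spanning forests. -/
def gibbsWeight (β : ℝ≥0∞) (Γ H : G.Subgraph) (φ : V → V → Prop) (F : G.Subgraph) : ℝ≥0∞ :=
  if β = ⊤ then (if IsMaximalSpanningForestExtending G Γ H φ F then 1 else 0)
  else if IsSpanningForestExtending G Γ H φ F then β ^ F.edgeSet.ncard else 0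

/-- The σ-algebra on the space of subgraphs of `G`: the product (cylinder) σ-algebra,
generated by the vertex- and edge-membership maps. -/
instance subgraphMeasurableSpace : MeasurableSpace G.Subgraph :=
  MeasurableSpace.comap
    (fun S => ((fun v => v ∈ S.verts), S.Adj) :
      G.Subgraph → (V → Prop) × (V → V → Prop)) inferInstance

/-- The finite-volume `β`-arboreal gas Gibbs measure `P^φ_{H,β}` on the finite subgraph `H`
of the host graph `Γ` with boundary condition `φ`, regarded as a measure on subgraphs of `G`:
each spanning forest `F` of `H` extending `φ` gets probability proportional to `β ^ |F|`
(uniform on `(H,φ)`-maximal spanning forests when `β = ∞`). -/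
def finGibbs (β : ℝ≥0∞) (Γ H : G.Subgraph) (φ : V → V → Prop) : Measure G.Subgraph :=
  (∑' F : G.Subgraph, gibbsWeight G β Γ H φ F)⁻¹ •
    Measure.sum fun F : G.Subgraph => gibbsWeight G β Γ H φ F • Measure.dirac F

/-- The raw space in which augmented subgraphs of `G` live: pairs `(S, Φ)` of a subgraph `S`
of `G` and a boundary map `Φ` assigning to each (finite) subgraph `H` a relation on `V`.
It carries the product Borel σ-algebra. -/
abbrev AugSub := G.Subgraph × (G.Subgraph → V → V → Prop)

/-- `φ` is an equivalence relation on the set `B` (relating only elements of `B`). -/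
def IsEquivRelOn (B : Set V) (φ : V → V → Prop) : Prop :=
  (∀ u v, φ u v → u ∈ B ∧ v ∈ B) ∧ (∀ u ∈ B, φ u u) ∧
    (∀ u v, φ u v → φ v u) ∧ (∀ u v w, φ u v → φ v w → φ u w)

/-- `(S, Φ)` is an augmented subgraph of the host graph `Γ ≤ G`: `S ≤ Γ`, for each finite
subgraph `H` of `Γ` the relation `Φ(H)` is an equivalence relation on the boundary `∂H`,
and the consistency condition holds: for finite subgraphs `H ⊆ K` of `Γ` and `u, v ∈ ∂H`,
`u` and `v` are `Φ(H)`-related iff they are connected in `((S ⊓ K) ∖ E[H])/Φ(K)`. -/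
def IsAugmentedIn (Γ : G.Subgraph) (A : AugSub G) : Prop :=
  A.1 ≤ Γ ∧
  (∀ H : G.Subgraph, H ≤ Γ → H.verts.Finite → IsEquivRelOn (bdry G Γ H) (A.2 H)) ∧
  (∀ H K : G.Subgraph, H ≤ K → K ≤ Γ → K.verts.Finite →
    ∀ u v, u ∈ bdry G Γ H → v ∈ bdry G Γ H →
      (A.2 H u v ↔
        quotConn G ((A.1 ⊓ K).deleteEdges H.edgeSet)
          (restrictRel (bdry G Γ K) (A.2 K)) u v))

/-- The data of an augmented subgraph `(S, Φ)` determined outside the finite subgraph `H`: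
the subgraph `S ∖ E[H]` together with the family `Φ_H = (Φ(K) : K ⊇ H finite)`. -/
def outsideMap (Γ H : G.Subgraph) (A : AugSub G) :
    G.Subgraph × (G.Subgraph → V → V → Prop) :=
  (A.1.deleteEdges H.edgeSet,
    fun K u v => (H ≤ K ∧ K ≤ Γ ∧ K.verts.Finite) ∧ A.2 K u v)

/-- The σ-algebra `𝒢_H` on augmented subgraphs generated by `(S, Φ) ↦ (S ∖ E[H], Φ_H)`. -/
def outSigma (Γ H : G.Subgraph) : MeasurableSpace (AugSub G) :=
  MeasurableSpace.comap (outsideMap G Γ H) inferInstance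

/-- A tail event: an event belonging to `𝒢_H` for every finite subgraph `H`. -/
def IsTailEvent (Γ : G.Subgraph) (X : Set (AugSub G)) : Prop :=
  ∀ H : G.Subgraph, H ≤ Γ → H.verts.Finite → MeasurableSet[outSigma G Γ H] X

/-- `Q` is an augmented `β`-arboreal gas Gibbs measure on the host graph `Γ ≤ G`:
a probability measure on augmented subgraphs of `Γ` such that for every finite subgraph `H`
of `Γ` and every subgraph `F₀` of `H`, the conditional probability of `{A ∩ H = F₀}` given
`𝒢_H` is almost surely `P^{Φ(H)}_{H,β}(F₀)`. -/
def IsAugGibbs (β : ℝ≥0∞) (Γ : G.Subgraph) (Q : Measure (AugSub G)) : Prop :=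
  IsProbabilityMeasure Q ∧
  Q {A : AugSub G | IsAugmentedIn G Γ A} = 1 ∧
  ∀ H : G.Subgraph, H ≤ Γ → H.verts.Finite →
    ∀ F₀ : G.Subgraph, F₀ ≤ H →
      (Q[({A : AugSub G | A.1 ⊓ H = F₀}).indicator (fun _ => (1 : ℝ)) | outSigma G Γ H])
        =ᵐ[Q] fun A => (finGibbs G β Γ H (A.2 H) {F₀}).toReal

/-- `P` is a `β`-arboreal gas Gibbs measure on the host graph `Γ ≤ G`: the pushforward of
some augmented `β`-arboreal gas Gibbs measure (a Gibbs augmentation of `P`) under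
`(S, Φ) ↦ S`. -/
def IsGibbs (β : ℝ≥0∞) (Γ : G.Subgraph) (P : Measure G.Subgraph) : Prop :=
  ∃ Q : Measure (AugSub G), IsAugGibbs G β Γ Q ∧ Q.map Prod.fst = P

/-- The finite subgraph with vertex set `{u, v}` and no edges. -/
def pairSub (u v : V) : G.Subgraph where
  verts := {u, v}
  Adj _ _ := False
  adj_sub h := h.elim
  edge_vert h := h.elim
  symm := ⟨fun _ _ h => h.elim⟩

/-- The augmented connectivity relation of an augmented subgraph `(S, Φ)`:
`u ↔ v` iff `Φ({u,v})(u,v) = 1`. -/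
def augConn (A : AugSub G) (u v : V) : Prop :=
  A.2 (pairSub G u v) u v

/-- The subgraph of `G` induced by a set `I` of vertices. -/
def traceSub (I : Set V) : G.Subgraph where
  verts := I
  Adj u v := G.Adj u v ∧ u ∈ I ∧ v ∈ I
  adj_sub h := h.1
  edge_vert h := h.2.1
  symm := ⟨fun _ _ h => ⟨G.symm.symm _ _ h.1, h.2.2, h.2.1⟩⟩

/-- A subgraph is connected: nonempty vertex set, any two vertices joined by a path. -/
def SubConnected (S : G.Subgraph) : Prop :=
  S.verts.Nonempty ∧ ∀ u ∈ S.verts, ∀ v ∈ S.verts, Relation.ReflTransGen S.Adj u v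

/-- The hypercubic lattice `ℤ^d`: vertices `Fin d → ℤ`, edges between points at
`ℓ¹`-distance one. -/
def ZdGraph (d : ℕ) : SimpleGraph (Fin d → ℤ) where
  Adj x y := ∑ i, (x i - y i).natAbs = 1
  symm := by
    constructor
    intro x y h
    rw [← h]
    exact Finset.sum_congr rfl fun i _ => by omega
  loopless := by constructor; intro x h; simp at h

/-- Translation of subgraphs of `ℤ^d` by a lattice vector `t`. -/
def translateSub {d : ℕ} (t : Fin d → ℤ) (S : (ZdGraph d).Subgraph) : (ZdGraph d).Subgraph where
  verts := {v | v - t ∈ S.verts}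
  Adj u v := S.Adj (u - t) (v - t)
  adj_sub := by
    intro u v h
    have h2 := S.adj_sub h
    simpa [ZdGraph, sub_sub_sub_cancel_right] using h2
  edge_vert := by intro u v h; exact S.edge_vert h
  symm := ⟨fun _ _ h => S.symm.symm _ _ h⟩

/-- Translation of augmented subgraphs of `ℤ^d` by a lattice vector `t`:
`(τ_t Φ)(H)(u,v) = Φ(H - t)(u - t, v - t)`. -/
def translateAug {d : ℕ} (t : Fin d → ℤ) (A : AugSub (ZdGraph d)) : AugSub (ZdGraph d) :=
  (translateSub t A.1, fun K u v => A.2 (translateSub (-t) K) (u - t) (v - t))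

/-- A translation-invariant augmented `β`-arboreal gas Gibbs measure on `ℤ^d`. -/
def IsTransInvAugGibbs (d : ℕ) (β : ℝ≥0∞) (Q : Measure (AugSub (ZdGraph d))) : Prop :=
  IsAugGibbs (ZdGraph d) β ⊤ Q ∧ ∀ t, Q.map (translateAug t) = Q

/-- An extremal point of the convex set of translation-invariant augmented `β`-arboreal gas
Gibbs measures on `ℤ^d`. -/
def IsExtremalTransInvAugGibbs (d : ℕ) (β : ℝ≥0∞)
    (Q : Measure (AugSub (ZdGraph d))) : Prop :=
  IsTransInvAugGibbs d β Q ∧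
    ∀ (Q₁ Q₂ : Measure (AugSub (ZdGraph d))) (t : ℝ≥0∞), 0 < t → t < 1 →
      IsTransInvAugGibbs d β Q₁ → IsTransInvAugGibbs d β Q₂ →
      Q = t • Q₁ + (1 - t) • Q₂ → Q₁ = Q₂

/-!
Given `𝒢_H`, the law of `A ∩ H` is `P^{Φ(H)}_{H,β}`, which for `0 < β < ∞` charges every
spanning forest of `H` extending `Φ(H)`. Deletion tolerance: the edgeless spanning subgraph of
`H` is such a forest. Merge tolerance: a forest `F` that is maximal among those extending
`Φ(H)` connects all of `H` in `F/Φ(H)`, since an edge of `H` joining two classes could be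
added to it. By the consistency of `Φ` (with `K = H` and the edgeless subgraph on `{u, v}`),
on `{A ∩ H = F}` all vertices of `H` are then augmented-connected. As there are finitely many
candidate forests and "`F` connects `H` modulo `Φ(H)`" is `𝒢_H`-measurable, the conditional
probability of merging is a.s. at least `P^{Φ(H)}_{H,β}(F) > 0` for a forest `F` chosen
from `Φ(H)`.
-/

theorem _root_.Relation.ReflTransGen.exists_rel_of_not {α : Type*} {r : α → α → Prop}
    {p : α → Prop} {u v : α} (h : Relation.ReflTransGen r u v) (hu : p u) (hv : ¬ p v) :
    ∃ a b, r a b ∧ p a ∧ ¬ p b := by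
  induction h with
  | refl => exact absurd hu hv
  | @tail b c _ hbc ih =>
    by_cases hb : p b
    · exact ⟨b, c, hbc, hb, hv⟩
    · exact ih hb

theorem _root_.Relation.ReflTransGen.cases_of_sup_edge {α : Type*} {r : α → α → Prop}
    {a b x y : α} (h : Relation.ReflTransGen (fun p q => r p q ∨ s(p, q) = s(a, b)) x y) :
    Relation.ReflTransGen r x y ∨
      (Relation.ReflTransGen r x a ∧ Relation.ReflTransGen r b y) ∨
      (Relation.ReflTransGen r x b ∧ Relation.ReflTransGen r a y) := by
  induction h with
  | refl => exact Or.inl .refl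
  | @tail w z _ hwz ih =>
    rcases hwz with hr | hab
    · rcases ih with h | ⟨h₁, h₂⟩ | ⟨h₁, h₂⟩
      · exact Or.inl (h.tail hr)
      · exact Or.inr (Or.inl ⟨h₁, h₂.tail hr⟩)
      · exact Or.inr (Or.inr ⟨h₁, h₂.tail hr⟩)
    · rcases Sym2.eq_iff.1 hab with ⟨rfl, rfl⟩ | ⟨rfl, rfl⟩
      · rcases ih with h | ⟨h, _⟩ | ⟨h, _⟩
        · exact Or.inr (Or.inl ⟨h, .refl⟩)
        · exact Or.inr (Or.inl ⟨h, .refl⟩)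
        · exact Or.inl h
      · rcases ih with h | ⟨h, _⟩ | ⟨h, _⟩
        · exact Or.inr (Or.inr ⟨h, .refl⟩)
        · exact Or.inl h
        · exact Or.inr (Or.inr ⟨h, .refl⟩)

theorem _root_.Measurable.reflTransGen {α β : Type*} [MeasurableSpace α] [Countable β]
    {r : α → β → β → Prop} (hr : ∀ x y, Measurable fun a => r a x y) (x y : β) :
    Measurable fun a => Relation.ReflTransGen (r a) x y := by
  have hchain : ∀ l : List β, Measurable fun a => List.IsChain (r a) l := by
    intro l
    induction l with
    | nil => simp
    | cons b l ih =>
      cases l with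
      | nil => simp
      | cons c l => simpa only [List.isChain_cons_cons] using (hr b c).and ih
  have hiff : ∀ a, Relation.ReflTransGen (r a) x y ↔
      ∃ l : List β, List.IsChain (r a) (x :: l) ∧ (x :: l).getLast (List.cons_ne_nil _ _) = y :=
    fun a => ⟨List.exists_isChain_cons_of_relationReflTransGen,
      fun ⟨l, hl, hlast⟩ => List.relationReflTransGen_of_exists_isChain_cons l hl hlast⟩
  simp_rw [hiff]
  exact Measurable.exists fun l => (hchain _).and measurable_const

section Measurability

variable {G}

theorem measurable_subgraph_iff {α : Type*} [MeasurableSpace α] {f : α → G.Subgraph} :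
    Measurable f ↔ (∀ v, Measurable fun a => v ∈ (f a).verts) ∧
      ∀ u v, Measurable fun a => (f a).Adj u v := by
  refine measurable_comap_iff.trans
    ⟨fun hf => ⟨fun v => ?_, fun u v => ?_⟩, fun ⟨hv, hadj⟩ => ?_⟩
  · exact (measurable_pi_apply v).comp (measurable_fst.comp hf)
  · exact (measurable_pi_apply v).comp ((measurable_pi_apply u).comp (measurable_snd.comp hf))
  · exact (measurable_pi_iff.2 hv).prodMk
      (measurable_pi_iff.2 fun u => measurable_pi_iff.2 (hadj u))

instance [Countable V] : MeasurableSingletonClass G.Subgraph where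
  measurableSet_singleton F := by
    have hF : ({F} : Set G.Subgraph) =
        {S | (∀ v, v ∈ S.verts ↔ v ∈ F.verts) ∧ ∀ u v, S.Adj u v ↔ F.Adj u v} := by
      ext S
      simp only [Set.mem_singleton_iff, Set.mem_ofPred_eq, SimpleGraph.Subgraph.ext_iff,
        Set.ext_iff, funext_iff, eq_iff_iff]
    obtain ⟨hv, hadj⟩ := measurable_subgraph_iff.1 (measurable_id (α := G.Subgraph))
    rw [hF]
    exact Measurable.setOf (by fun_prop)

theorem measurable_inf_const (H : G.Subgraph) : Measurable fun S : G.Subgraph => S ⊓ H := by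
  obtain ⟨hv, hadj⟩ := measurable_subgraph_iff.1 (measurable_id (α := G.Subgraph))
  exact measurable_subgraph_iff.2 ⟨fun v => (hv v).and measurable_const,
    fun u v => (hadj u v).and measurable_const⟩

theorem measurable_fst_inf (H : G.Subgraph) : Measurable fun A : AugSub G => A.1 ⊓ H :=
  (measurable_inf_const H).comp measurable_fst

theorem measurable_quotConn [Countable V] {α : Type*} [MeasurableSpace α] {f : α → G.Subgraph}
    (hf : Measurable f) {φ : α → V → V → Prop} (hφ : ∀ u v, Measurable fun a => φ a u v)
    (u v : V) : Measurable fun a => quotConn G (f a) (φ a) u v := by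
  obtain ⟨hv, hadj⟩ := measurable_subgraph_iff.1 hf
  exact Measurable.reflTransGen (fun x y => by fun_prop) u v

theorem measurable_restrictRel {α : Type*} [MeasurableSpace α] (B : Set V)
    {φ : α → V → V → Prop} (hφ : ∀ u v, Measurable fun a => φ a u v) (u v : V) :
    Measurable fun a => restrictRel B (φ a) u v :=
  measurable_const.and (measurable_const.and (hφ u v))

theorem measurable_augSub_rel (K : G.Subgraph) (u v : V) :
    Measurable fun A : AugSub G => A.2 K u v := by
  fun_prop

theorem measurable_outsideMap (Γ H : G.Subgraph) : Measurable (outsideMap G Γ H) := by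
  obtain ⟨hv, hadj⟩ :=
    measurable_subgraph_iff.1 (measurable_fst (α := G.Subgraph) (β := G.Subgraph → V → V → Prop))
  refine Measurable.prodMk (measurable_subgraph_iff.2 ⟨hv, fun u v => ?_⟩) ?_
  · exact (hadj u v).and measurable_const
  · exact measurable_pi_iff.2 fun K => measurable_pi_iff.2 fun u => measurable_pi_iff.2 fun v =>
      measurable_const.and (measurable_augSub_rel K u v)

theorem outSigma_le (Γ H : G.Subgraph) :
    outSigma G Γ H ≤ (inferInstance : MeasurableSpace (AugSub G)) :=
  (measurable_outsideMap Γ H).comap_le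

theorem measurableSet_outSigma_of_rel {Γ H : G.Subgraph} (hHΓ : H ≤ Γ) (hH : H.verts.Finite)
    {P : (V → V → Prop) → Prop} (hP : Measurable P) :
    MeasurableSet[outSigma G Γ H] {A : AugSub G | P (A.2 H)} := by
  refine ⟨{p | P (p.2 H)}, (hP.comp ((measurable_pi_apply H).comp measurable_snd)).setOf, ?_⟩
  ext A
  have hrel : (outsideMap G Γ H A).2 H = A.2 H := by
    funext u v
    exact propext (and_iff_right ⟨le_rfl, hHΓ, hH⟩)
  simp only [Set.mem_preimage, Set.mem_ofPred_eq, hrel]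

end Measurability

section Forests

variable {G}

theorem finite_setOf_le {H : G.Subgraph} (hH : H.verts.Finite) :
    {F : G.Subgraph | F ≤ H}.Finite := by
  let f : G.Subgraph → Set V × Set (V × V) := fun F => (F.verts, {p | F.Adj p.1 p.2})
  have hf : f.Injective := fun F F' h => by
    simp only [f, Prod.mk.injEq, Set.ext_iff, Set.mem_ofPred_eq, Prod.forall] at h
    exact SimpleGraph.Subgraph.ext (Set.ext h.1) (funext₂ fun u v => propext (h.2 u v))
  refine Set.Finite.of_finite_image
    ((hH.finite_subsets.prod (hH.prod hH).finite_subsets).subset ?_) hf.injOn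
  rintro _ ⟨F, hF, rfl⟩
  exact ⟨hF.1, fun p hp => ⟨H.edge_vert (hF.2 hp), H.edge_vert (hF.2 hp).symm⟩⟩

theorem edgeSet_eq_empty_of_forall_not_adj {S : G.Subgraph} (h : ∀ u v, ¬ S.Adj u v) :
    S.edgeSet = ∅ := by
  simp_rw [Set.eq_empty_iff_forall_notMem, Sym2.forall, SimpleGraph.Subgraph.mem_edgeSet]
  exact h

theorem quotConn_mono {F F' : G.Subgraph} (hFF' : F ≤ F') {φ : V → V → Prop} {u v : V}
    (h : quotConn G F φ u v) : quotConn G F' φ u v :=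
  Relation.ReflTransGen.mono (fun _ _ hpq => hpq.imp (fun h => hFF'.2 h)
    fun ⟨hp, hq, h⟩ => ⟨hFF'.1 hp, hFF'.1 hq, h⟩) _ _ h

theorem quotConn_symm {F : G.Subgraph} {φ : V → V → Prop} (hφ : Std.Symm φ) {u v : V}
    (h : quotConn G F φ u v) : quotConn G F φ v u :=
  have : Std.Symm fun a b => F.Adj a b ∨ (a ∈ F.verts ∧ b ∈ F.verts ∧ φ a b) :=
    ⟨fun _ _ hpq => hpq.imp (fun h => h.symm) fun ⟨hp, hq, h⟩ => ⟨hq, hp, hφ.symm _ _ h⟩⟩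
  Std.Symm.symm (r := Relation.ReflTransGen _) _ _ h

theorem isSpanningForestExtending_deleteEdges_univ (Γ H : G.Subgraph) (φ : V → V → Prop) :
    IsSpanningForestExtending G Γ H φ (H.deleteEdges Set.univ) :=
  ⟨H.deleteEdges_le _, rfl, fun _ _ h => absurd (Set.mem_univ _) h.2⟩

theorem Extends.sup_subgraphOfAdj {Γ H F : G.Subgraph} {φ : V → V → Prop} (hφ : Std.Symm φ)
    (hF : Extends G Γ H φ F) {a b : V} (ha : a ∈ F.verts) (hb : b ∈ F.verts) (hab : G.Adj a b)
    (hnot : ¬ quotConn G F (restrictRel (bdry G Γ H) φ) a b) :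
    Extends G Γ H φ (F ⊔ G.subgraphOfAdj hab) := by
  set ψ := restrictRel (bdry G Γ H) φ
  have hψ : Std.Symm ψ := ⟨fun _ _ ⟨hp, hq, h⟩ => ⟨hq, hp, hφ.symm _ _ h⟩⟩
  have hverts : (F ⊔ G.subgraphOfAdj hab).verts ⊆ F.verts :=
    Set.union_subset le_rfl (Set.insert_subset ha (Set.singleton_subset_iff.2 hb))
  have hadj : ∀ {p q}, (F ⊔ G.subgraphOfAdj hab).Adj p q → F.Adj p q ∨ s(p, q) = s(a, b) :=
    fun h => h.imp id Eq.symm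
  intro x y hxy hxy'
  by_cases hxyab : s(x, y) = s(a, b)
  · have hle : (F ⊔ G.subgraphOfAdj hab).deleteEdges {s(x, y)} ≤ F :=
      ⟨hverts, fun p q ⟨h, hne⟩ => (hadj h).resolve_right (hxyab ▸ hne)⟩
    have h := quotConn_mono hle hxy'
    rcases Sym2.eq_iff.1 hxyab with ⟨rfl, rfl⟩ | ⟨rfl, rfl⟩
    · exact hnot h
    · exact hnot (quotConn_symm hψ h)
  · have hFxy : F.Adj x y := (hadj hxy).resolve_right hxyab
    have hlift : Relation.ReflTransGen (fun p q =>
        ((F.deleteEdges {s(x, y)}).Adj p q ∨ (p ∈ F.verts ∧ q ∈ F.verts ∧ ψ p q)) ∨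
          s(p, q) = s(a, b)) x y := by
      refine Relation.ReflTransGen.mono (fun p q hpq => ?_) _ _ hxy'
      rcases hpq with ⟨h, hne⟩ | ⟨hp, hq, h⟩
      · exact (hadj h).elim (fun h => Or.inl (Or.inl ⟨h, hne⟩)) Or.inr
      · exact Or.inl (Or.inr ⟨hverts hp, hverts hq, h⟩)
    have hdel : ∀ {p q}, quotConn G (F.deleteEdges {s(x, y)}) ψ p q → quotConn G F ψ p q :=
      quotConn_mono (F.deleteEdges_le _)
    have hstep : quotConn G F ψ x y := .single (Or.inl hFxy)
    rcases hlift.cases_of_sup_edge with h | ⟨hxa, hby⟩ | ⟨hxb, hay⟩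
    · exact hF x y hFxy h
    · exact hnot (((quotConn_symm hψ (hdel hxa)).trans hstep).trans
        (quotConn_symm hψ (hdel hby)))
    · exact hnot (((hdel hay).trans (quotConn_symm hψ hstep)).trans (hdel hxb))

theorem exists_isSpanningForestExtending_forall_quotConn (Γ : G.Subgraph) {H : G.Subgraph}
    (hH : H.verts.Finite) (hconn : SubConnected G H) {φ : V → V → Prop} (hφ : Std.Symm φ) :
    ∃ F, IsSpanningForestExtending G Γ H φ F ∧
      ∀ u ∈ H.verts, ∀ v ∈ H.verts, quotConn G F (restrictRel (bdry G Γ H) φ) u v := by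
  set ψ := restrictRel (bdry G Γ H) φ
  have hfin : {F | IsSpanningForestExtending G Γ H φ F}.Finite :=
    (finite_setOf_le hH).subset fun _ hF => hF.1
  obtain ⟨F, ⟨hFH, hverts, hext⟩, hmax⟩ :=
    hfin.exists_maximal ⟨_, isSpanningForestExtending_deleteEdges_univ Γ H φ⟩
  refine ⟨F, ⟨hFH, hverts, hext⟩, fun u hu v hv => ?_⟩
  by_contra huv
  obtain ⟨a, b, hab, hua, hub⟩ :=
    (hconn.2 u hu v hv).exists_rel_of_not (p := quotConn G F ψ u) .refl huv
  have hnot : ¬ quotConn G F ψ a b := fun h => hub (hua.trans h)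
  have ha : a ∈ F.verts := hverts ▸ H.edge_vert hab
  have hb : b ∈ F.verts := hverts ▸ H.edge_vert hab.symm
  have hF₁H : F ⊔ G.subgraphOfAdj (H.adj_sub hab) ≤ H :=
    sup_le hFH (G.subgraphOfAdj_le_of_adj H hab)
  have hF₁ : IsSpanningForestExtending G Γ H φ (F ⊔ G.subgraphOfAdj (H.adj_sub hab)) :=
    ⟨hF₁H, le_antisymm hF₁H.1 (hverts ▸ (le_sup_left : F ≤ _).1),
      hext.sup_subgraphOfAdj hφ ha hb _ hnot⟩
  exact hnot (.single (Or.inl ((hmax hF₁ le_sup_left).2 (Or.inr (by simp)))))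

end Forests

section FiniteVolume

variable {G} {β : ℝ≥0∞} {Γ H : G.Subgraph} {φ : V → V → Prop}

theorem gibbsWeight_of_isSpanningForestExtending (hβ : β ≠ ⊤) {F : G.Subgraph}
    (hF : IsSpanningForestExtending G Γ H φ F) :
    gibbsWeight G β Γ H φ F = β ^ F.edgeSet.ncard := by
  rw [gibbsWeight, if_neg hβ, if_pos hF]

theorem gibbsWeight_of_not_isSpanningForestExtending (hβ : β ≠ ⊤) {F : G.Subgraph}
    (hF : ¬ IsSpanningForestExtending G Γ H φ F) : gibbsWeight G β Γ H φ F = 0 := by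
  rw [gibbsWeight, if_neg hβ, if_neg hF]

theorem gibbsWeight_ne_top (hβ : β ≠ ⊤) (F : G.Subgraph) : gibbsWeight G β Γ H φ F ≠ ⊤ := by
  by_cases hF : IsSpanningForestExtending G Γ H φ F
  · rw [gibbsWeight_of_isSpanningForestExtending hβ hF]
    exact ENNReal.pow_ne_top hβ
  · rw [gibbsWeight_of_not_isSpanningForestExtending hβ hF]
    exact ENNReal.zero_ne_top

theorem tsum_gibbsWeight_ne_top (hβ : β ≠ ⊤) (hH : H.verts.Finite) :
    ∑' F, gibbsWeight G β Γ H φ F ≠ ⊤ := by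
  rw [tsum_eq_sum (s := (finite_setOf_le hH).toFinset) fun F hF =>
    gibbsWeight_of_not_isSpanningForestExtending hβ fun h' =>
      hF ((finite_setOf_le hH).mem_toFinset.2 h'.1)]
  exact ENNReal.sum_ne_top.2 fun F _ => gibbsWeight_ne_top hβ F

theorem tsum_gibbsWeight_ne_zero (hβ : β ≠ ⊤) : ∑' F, gibbsWeight G β Γ H φ F ≠ 0 := by
  intro h
  have h0 := ENNReal.tsum_eq_zero.1 h (H.deleteEdges Set.univ)
  rw [gibbsWeight_of_isSpanningForestExtending hβ
    (isSpanningForestExtending_deleteEdges_univ Γ H φ)] at h0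
  have hE : (H.deleteEdges Set.univ).edgeSet = ∅ :=
    edgeSet_eq_empty_of_forall_not_adj fun _ _ h => h.2 (Set.mem_univ _)
  simp [hE] at h0

theorem isProbabilityMeasure_finGibbs (hβ : β ≠ ⊤) (hH : H.verts.Finite) :
    IsProbabilityMeasure (finGibbs G β Γ H φ) := by
  constructor
  simp only [finGibbs, Measure.smul_apply, Measure.sum_apply _ MeasurableSet.univ,
    measure_univ, smul_eq_mul, mul_one]
  exact ENNReal.inv_mul_cancel (tsum_gibbsWeight_ne_zero hβ) (tsum_gibbsWeight_ne_top hβ hH)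

theorem finGibbs_singleton_toReal_pos (hβ0 : β ≠ 0) (hβ : β ≠ ⊤) (hH : H.verts.Finite)
    {F : G.Subgraph} (hF : IsSpanningForestExtending G Γ H φ F) :
    0 < (finGibbs G β Γ H φ {F}).toReal := by
  have := isProbabilityMeasure_finGibbs (φ := φ) (Γ := Γ) hβ hH
  refine ENNReal.toReal_pos (ne_of_gt ?_) (measure_ne_top _ _)
  calc 0 < (∑' F', gibbsWeight G β Γ H φ F')⁻¹ * gibbsWeight G β Γ H φ F := by
        rw [gibbsWeight_of_isSpanningForestExtending hβ hF]
        exact ENNReal.mul_pos (ENNReal.inv_ne_zero.2 (tsum_gibbsWeight_ne_top hβ hH))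
          (pow_ne_zero _ hβ0)
    _ = (∑' F', gibbsWeight G β Γ H φ F')⁻¹ •
          (gibbsWeight G β Γ H φ F • Measure.dirac F) {F} := by
        simp [Measure.dirac_apply_of_mem (Set.mem_singleton F)]
    _ ≤ finGibbs G β Γ H φ {F} := by
        rw [finGibbs, Measure.smul_apply]
        exact mul_le_mul_right (Measure.le_iff'.1 (Measure.le_sum _ F) _) _

end FiniteVolume

theorem _root_.MeasureTheory.ae_condExp_indicator_le_of_inter_subset {α : Type*}
    {m m0 : MeasurableSpace α} {μ : Measure α} [IsFiniteMeasure μ] (hm : m ≤ m0) {B C D : Set α}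
    (hB : MeasurableSet[m] B) (hC : MeasurableSet C) (hD : MeasurableSet D)
    (hBCD : ∀ᵐ x ∂μ, x ∈ B → x ∈ C → x ∈ D) :
    ∀ᵐ x ∂μ, x ∈ B → μ[C.indicator (fun _ => (1 : ℝ)) | m] x ≤
      μ[D.indicator (fun _ => (1 : ℝ)) | m] x := by
  have hint : ∀ {s : Set α}, MeasurableSet s → Integrable (s.indicator fun _ => (1 : ℝ)) μ :=
    fun hs => (integrable_const 1).indicator hs
  have hle : B.indicator (C.indicator fun _ => (1 : ℝ)) ≤ᵐ[μ] D.indicator fun _ => 1 := by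
    filter_upwards [hBCD] with x hx
    by_cases hxBC : x ∈ B ∧ x ∈ C
    · simp [hxBC.1, hxBC.2, hx hxBC.1 hxBC.2]
    · rw [Set.indicator_indicator, Set.indicator_of_notMem (s := B ∩ C) hxBC]
      exact Set.indicator_nonneg (fun _ _ => zero_le_one) x
  filter_upwards [condExp_indicator (m := m) (hint hC) hB,
    condExp_mono (m := m) ((hint hC).indicator (hm _ hB)) (hint hD) hle] with x hpull hmono hxB
  rwa [hpull, Set.indicator_of_mem hxB] at hmono

section Augmented

variable {G}

theorem pairSub_le {H : G.Subgraph} {u v : V} (hu : u ∈ H.verts) (hv : v ∈ H.verts) :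
    pairSub G u v ≤ H :=
  ⟨Set.insert_subset hu (Set.singleton_subset_iff.2 hv), fun _ _ h => h.elim⟩

theorem mem_bdry_pairSub_left {Γ : G.Subgraph} {u v : V} (hu : ∃ y, Γ.Adj u y) :
    u ∈ bdry G Γ (pairSub G u v) :=
  ⟨Or.inl rfl, hu.imp fun _ hy => ⟨hy, id⟩⟩

theorem mem_bdry_pairSub_right {Γ : G.Subgraph} {u v : V} (hv : ∃ y, Γ.Adj v y) :
    v ∈ bdry G Γ (pairSub G u v) :=
  ⟨Or.inr rfl, hv.imp fun _ hy => ⟨hy, id⟩⟩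

theorem IsAugmentedIn.augConn_iff {Γ H : G.Subgraph} {A : AugSub G} (hA : IsAugmentedIn G Γ A)
    (hHΓ : H ≤ Γ) (hH : H.verts.Finite) {u v : V} (hu : u ∈ H.verts) (hv : v ∈ H.verts)
    (hnu : ∃ y, Γ.Adj u y) (hnv : ∃ y, Γ.Adj v y) :
    augConn G A u v ↔ quotConn G (A.1 ⊓ H) (restrictRel (bdry G Γ H) (A.2 H)) u v := by
  have hE : (pairSub G u v).edgeSet = ∅ := edgeSet_eq_empty_of_forall_not_adj fun _ _ h => h
  have h := hA.2.2 _ H (pairSub_le hu hv) hHΓ hH u v (mem_bdry_pairSub_left hnu)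
    (mem_bdry_pairSub_right hnv)
  rwa [hE, SimpleGraph.Subgraph.deleteEdges_empty_eq] at h

end Augmented

namespace IsAugGibbs

variable {G} {β : ℝ≥0∞} {Γ H : G.Subgraph} {Q : Measure (AugSub G)}

/-- `Q {A | IsAugmentedIn G Γ A} = 1` only bounds an outer measure; an almost-sure statement
needs a measurable event containing that set. -/
theorem ae_of_isAugmentedIn (hQ : IsAugGibbs G β Γ Q) {p : AugSub G → Prop} (hp : Measurable p)
    (h : ∀ A, IsAugmentedIn G Γ A → p A) : ∀ᵐ A ∂Q, p A := by
  have := hQ.1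
  rw [ae_iff_measure_eq hp.setOf.nullMeasurableSet, measure_univ]
  exact le_antisymm prob_le_one (hQ.2.1 ▸ measure_mono h)

theorem ae_finGibbs_le_condExp [Countable V] (hQ : IsAugGibbs G β Γ Q) (hHΓ : H ≤ Γ)
    (hH : H.verts.Finite) {F : G.Subgraph} (hFH : F ≤ H) {B D : Set (AugSub G)}
    (hB : MeasurableSet[outSigma G Γ H] B) (hD : MeasurableSet D)
    (hBD : ∀ᵐ A ∂Q, A ∈ B → A.1 ⊓ H = F → A ∈ D) :
    ∀ᵐ A ∂Q, A ∈ B → (finGibbs G β Γ H (A.2 H) {F}).toReal ≤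
      Q[D.indicator (fun _ => (1 : ℝ)) | outSigma G Γ H] A := by
  have := hQ.1
  have hC : MeasurableSet {A : AugSub G | A.1 ⊓ H = F} :=
    measurable_fst_inf H (measurableSet_singleton F)
  filter_upwards [hQ.2.2 H hHΓ hH F hFH,
    ae_condExp_indicator_le_of_inter_subset (outSigma_le Γ H) hB hC hD hBD] with A hgibbs hle hA
  rw [← hgibbs]
  exact hle hA

theorem ae_condExp_noEdge_pos [Countable V] (hQ : IsAugGibbs G β Γ Q) (hβ0 : β ≠ 0)
    (hβ : β ≠ ⊤) (hHΓ : H ≤ Γ) (hH : H.verts.Finite) :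
    ∀ᵐ A ∂Q, 0 < Q[{A : AugSub G | ∀ u v, ¬ (A.1 ⊓ H).Adj u v}.indicator
      (fun _ => (1 : ℝ)) | outSigma G Γ H] A := by
  have hD : MeasurableSet {A : AugSub G | ∀ u v, ¬ (A.1 ⊓ H).Adj u v} := by
    obtain ⟨-, hadj⟩ := measurable_subgraph_iff.1 (measurable_fst_inf H)
    exact Measurable.setOf (Measurable.forall fun u => Measurable.forall fun v => (hadj u v).not)
  have hB : MeasurableSet[outSigma G Γ H] Set.univ := MeasurableSet.univ
  filter_upwards [hQ.ae_finGibbs_le_condExp hHΓ hH (H.deleteEdges_le Set.univ) hB hD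
    (ae_of_all _ fun A _ hA u v huv => (hA ▸ huv).2 (Set.mem_univ _))] with A hA
  exact (finGibbs_singleton_toReal_pos hβ0 hβ hH
    (isSpanningForestExtending_deleteEdges_univ Γ H _)).trans_le (hA trivial)

theorem ae_condExp_merge_pos [Countable V] (hQ : IsAugGibbs G β Γ Q) (hβ0 : β ≠ 0)
    (hβ : β ≠ ⊤) (hHΓ : H ≤ Γ) (hH : H.verts.Finite) (hconn : SubConnected G H)
    (hnbr : ∀ u ∈ H.verts, ∃ y, Γ.Adj u y) :
    ∀ᵐ A ∂Q, 0 < Q[{A : AugSub G | ∀ u ∈ H.verts, ∀ v ∈ H.verts, augConn G A u v}.indicator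
      (fun _ => (1 : ℝ)) | outSigma G Γ H] A := by
  set ψ : AugSub G → V → V → Prop := fun A => restrictRel (bdry G Γ H) (A.2 H)
  have hψ : ∀ u v, Measurable fun A => ψ A u v :=
    measurable_restrictRel _ (measurable_augSub_rel H)
  have hM : MeasurableSet {A : AugSub G | ∀ u ∈ H.verts, ∀ v ∈ H.verts, augConn G A u v} :=
    Measurable.setOf (by unfold augConn; fun_prop)
  have hreg : ∀ᵐ A ∂Q, (∀ u v, A.2 H u v → A.2 H v u) ∧
      ∀ u ∈ H.verts, ∀ v ∈ H.verts, quotConn G (A.1 ⊓ H) (ψ A) u v → augConn G A u v := by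
    refine hQ.ae_of_isAugmentedIn ?_ fun A hA => ⟨(hA.2.1 H hHΓ hH).2.2.1,
      fun u hu v hv => (hA.augConn_iff hHΓ hH hu hv (hnbr u hu) (hnbr v hv)).2⟩
    have := measurable_quotConn (measurable_fst_inf H) hψ
    unfold augConn
    fun_prop
  have hkey : ∀ F ∈ {F | F ≤ H}, ∀ᵐ A ∂Q,
      A ∈ {A : AugSub G | ∀ u ∈ H.verts, ∀ v ∈ H.verts, quotConn G F (ψ A) u v} →
      (finGibbs G β Γ H (A.2 H) {F}).toReal ≤ Q[{A : AugSub G | ∀ u ∈ H.verts, ∀ v ∈ H.verts,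
        augConn G A u v}.indicator (fun _ => (1 : ℝ)) | outSigma G Γ H] A := by
    intro F hF
    refine hQ.ae_finGibbs_le_condExp hHΓ hH hF ?_ hM ?_
    · have hrel : ∀ u v, Measurable fun φ : V → V → Prop => restrictRel (bdry G Γ H) φ u v :=
        measurable_restrictRel _ fun u v => by fun_prop
      have := measurable_quotConn (measurable_const (a := F)) hrel
      exact measurableSet_outSigma_of_rel hHΓ hH (P := fun φ => ∀ u ∈ H.verts, ∀ v ∈ H.verts,
        quotConn G F (restrictRel (bdry G Γ H) φ) u v) (by fun_prop)
    · filter_upwards [hreg] with A hA hB hAF u hu v hv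
      exact hA.2 u hu v hv (hAF ▸ hB u hu v hv)
  filter_upwards [(ae_ball_iff (finite_setOf_le hH).countable).2 hkey, hreg] with A hA hAreg
  obtain ⟨F, hF, hFconn⟩ := exists_isSpanningForestExtending_forall_quotConn Γ hH hconn ⟨hAreg.1⟩
  exact (finGibbs_singleton_toReal_pos hβ0 hβ hH hF).trans_le (hA F hF.1 hFconn)

end IsAugGibbs

theorem ZdGraph.exists_adj {d : ℕ} (hd : 0 < d) (x : Fin d → ℤ) : ∃ y, (ZdGraph d).Adj x y := by
  refine ⟨Function.update x ⟨0, hd⟩ (x ⟨0, hd⟩ + 1), ?_⟩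
  show ∑ i, (x i - Function.update x ⟨0, hd⟩ (x ⟨0, hd⟩ + 1) i).natAbs = 1
  rw [Finset.sum_eq_single_of_mem _ (Finset.mem_univ _) fun i _ hi => by
    rw [Function.update_of_ne hi, sub_self, Int.natAbs_zero]]
  simp

/-- Lemma: deletion tolerance and merge tolerance. Fix `d ≥ 2` and
`β ∈ (0,∞)`, let `Q` be an augmented `β`-arboreal gas Gibbs measure on `ℤ^d` and let
`(A,Φ) ~ Q`. Then (1) for every finite subgraph `H`, the conditional probability given
`𝒢_H` that `A ∩ H` has no edges is a.s. positive, and (2) for every finite connected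
subgraph `H`, the conditional probability given `𝒢_H` that all vertices of `H` lie in a
single augmented connectivity class is a.s. positive. -/
theorem deletion_and_merge_tolerance
    (d : ℕ) (hd : 2 ≤ d) (β : ℝ≥0∞) (hβ0 : 0 < β) (hβtop : β ≠ ⊤)
    (Q : Measure (AugSub (ZdGraph d))) (hQ : IsAugGibbs (ZdGraph d) β ⊤ Q) :
    (∀ H : (ZdGraph d).Subgraph, H.verts.Finite →
      ∀ᵐ A ∂Q, 0 <
        (Q[({A : AugSub (ZdGraph d) | ∀ u v, ¬ (A.1 ⊓ H).Adj u v}).indicator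
          (fun _ => (1 : ℝ)) | outSigma (ZdGraph d) ⊤ H]) A) ∧
    (∀ H : (ZdGraph d).Subgraph, H.verts.Finite → SubConnected (ZdGraph d) H →
      ∀ᵐ A ∂Q, 0 <
        (Q[({A : AugSub (ZdGraph d) |
            ∀ u ∈ H.verts, ∀ v ∈ H.verts, augConn (ZdGraph d) A u v}).indicator
          (fun _ => (1 : ℝ)) | outSigma (ZdGraph d) ⊤ H]) A) :=
  ⟨fun _ hH => hQ.ae_condExp_noEdge_pos hβ0.ne' hβtop le_top hH,
    fun _ hH hconn => hQ.ae_condExp_merge_pos hβ0.ne' hβtop le_top hH hconn fun u _ =>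
      (ZdGraph.exists_adj (by omega) u).imp fun _ => SimpleGraph.Subgraph.top_adj.2⟩

end ArborealGas

end
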